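/- Let L ⊆ sl₂(ℂ[λ]) be a Lie subalgebra of finite codimension, let H ⊆ L be a Lie subalgebra of finite codimension in L, and let h : H → L be a ℂ-linear map satisfying h([p₁,p₂]) = [h(p₁),p₂] = [p₁,h(p₂)] for all p₁, p₂ ∈ H. Then there exist polynomials p(λ), q(λ) ∈ ℂ[λ] with q ≠ 0 and a Lie subalgebra H̃ ⊆ H of finite codimension in H such that q(λ)·h(w) = p(λ)·w for all w ∈ H̃, where · denotes the ℂ[λ]-module multiplication on sl₂(ℂ[λ]). (This is the core content of the statement that the associative algebra Itw(L) of equivalence classes of such intertwining operators is commutative and isomorphic to the field of rational functions in λ.) -/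

import Mathlib

/-!
The intertwining relation `⁅h x, y⁆ = ⁅x, h y⁆` already pins `h` down on all of `H`, so one can
take `H' = H`. Finite codimension provides `v_E, v_F ∈ H` that are nonzero
polynomial multiples `a • e`, `b • f` of the standard generators: `ℂ[λ]` is infinite-dimensional,
so `c ↦ c • e` cannot stay injective modulo `H`. Since `⁅h v, v⁆ = 0`, the traceless matrix
`h v_E` commutes with `e`, hence `h v_E = α • e`; likewise `h v_F = β • f`, and pairing `v_E`
with `v_F` gives `α b = a β`. For every `w ∈ H` the traceless matrix `a b • h w - α b • w` then
commutes with both `e` and `f`, so it vanishes.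
-/

attribute [local instance 100] LieRing.ofAssociativeRing

/-- The Lie algebra `sl₂(ℂ[λ])` of traceless `2×2` matrices over the polynomial ring `ℂ[λ]`,
regarded as a Lie algebra over `ℂ`. -/
noncomputable def sl2Poly : LieSubalgebra ℂ (Matrix (Fin 2) (Fin 2) (Polynomial ℂ)) where
  carrier := {A | Matrix.trace A = 0}
  add_mem' := fun {a b} ha hb => by
    simp only [Set.mem_setOf_eq, Matrix.trace_add] at *
    rw [ha, hb, add_zero]
  zero_mem' := by simp
  smul_mem' := fun c a ha => by
    simp only [Set.mem_setOf_eq, Matrix.trace_smul] at *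
    rw [ha, smul_zero]
  lie_mem' := fun {a b} _ _ => by
    show Matrix.trace ⁅a, b⁆ = 0
    rw [Ring.lie_def, Matrix.trace_sub, Matrix.trace_mul_comm, sub_self]

theorem LinearMap.exists_ne_zero_map_mem_of_not_finite {R V W : Type*} [Ring R] [AddCommGroup V] [Module R V]
    [AddCommGroup W] [Module R W] (hV : ¬ Module.Finite R V) (f : V →ₗ[R] W)
    (S : Submodule R W) [IsNoetherian R (W ⧸ S)] : ∃ v ≠ 0, f v ∈ S := by
  by_contra! hf
  refine hV (Module.Finite.of_injective (S.mkQ ∘ₗ f) ((injective_iff_map_eq_zero _).mpr ?_))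
  intro v hv
  by_contra hv₀
  exact hf v hv₀ ((Submodule.Quotient.mk_eq_zero S).mp hv)

namespace Matrix

instance isAddTorsionFree {m n α : Type*} [AddGroup α] [IsAddTorsionFree α] : IsAddTorsionFree (Matrix m n α) :=
  inferInstanceAs (IsAddTorsionFree (m → n → α))

instance noZeroSMulDivisors {m n α : Type*} [Ring α] [IsDomain α] : NoZeroSMulDivisors α (Matrix m n α) :=
  inferInstanceAs (NoZeroSMulDivisors α (m → n → α))

variable (R : Type*) [CommRing R]

def sl2E : Matrix (Fin 2) (Fin 2) R := !![0, 1; 0, 0]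

def sl2F : Matrix (Fin 2) (Fin 2) R := !![0, 0; 1, 0]

def sl2H : Matrix (Fin 2) (Fin 2) R := !![1, 0; 0, -1]

@[simp] lemma trace_sl2E : (sl2E R).trace = 0 := by simp [sl2E]

@[simp] lemma trace_sl2F : (sl2F R).trace = 0 := by simp [sl2F]

lemma lie_sl2E_sl2F : ⁅sl2E R, sl2F R⁆ = sl2H R := by
  simp [sl2E, sl2F, sl2H, Ring.lie_def]

variable {R}

lemma smul_sl2H_injective : Function.Injective (fun a : R => a • sl2H R) :=
  fun a b h => by simpa [sl2H] using congr_fun₂ h 0 0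

lemma eq_smul_sl2E_of_lie_sl2E_eq_zero [IsAddTorsionFree R] {X : Matrix (Fin 2) (Fin 2) R}
    (hX : X.trace = 0) (h : ⁅X, sl2E R⁆ = 0) : X = X 0 1 • sl2E R := by
  obtain ⟨a, b, c, d, rfl⟩ : ∃ a b c d, X = !![a, b; c, d] := ⟨_, _, _, _, eta_fin_two X⟩
  have hc : c = 0 := by simpa [sl2E, Ring.lie_def] using congr_fun₂ h 1 1
  have hd : a = d := by simpa [sl2E, Ring.lie_def, sub_eq_zero] using congr_fun₂ h 0 1
  have ha : a = 0 := self_eq_neg.mp (by simpa [← hd, add_eq_zero_iff_eq_neg] using hX)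
  subst hc hd ha
  simp [sl2E]

lemma eq_smul_sl2F_of_lie_sl2F_eq_zero [IsAddTorsionFree R] {X : Matrix (Fin 2) (Fin 2) R}
    (hX : X.trace = 0) (h : ⁅X, sl2F R⁆ = 0) : X = X 1 0 • sl2F R := by
  obtain ⟨a, b, c, d, rfl⟩ : ∃ a b c d, X = !![a, b; c, d] := ⟨_, _, _, _, eta_fin_two X⟩
  have hb : b = 0 := by simpa [sl2F, Ring.lie_def] using congr_fun₂ h 0 0
  have hd : d = a := by simpa [sl2F, Ring.lie_def, sub_eq_zero] using congr_fun₂ h 1 0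
  have ha : a = 0 := self_eq_neg.mp (by simpa [hd, add_eq_zero_iff_eq_neg] using hX)
  subst hb hd ha
  simp [sl2F]

lemma eq_zero_of_lie_sl2E_eq_zero_of_lie_sl2F_eq_zero [IsAddTorsionFree R]
    {X : Matrix (Fin 2) (Fin 2) R} (hX : X.trace = 0) (hE : ⁅X, sl2E R⁆ = 0)
    (hF : ⁅X, sl2F R⁆ = 0) : X = 0 := by
  have hX₀₁ : X 0 1 = 0 := by
    rw [eq_smul_sl2E_of_lie_sl2E_eq_zero hX hE, smul_lie, lie_sl2E_sl2F] at hF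
    exact smul_sl2H_injective (hF.trans (zero_smul R _).symm)
  rw [eq_smul_sl2E_of_lie_sl2E_eq_zero hX hE, hX₀₁, zero_smul]

theorem exists_smul_eq_smul_of_lie_eq_lie [IsDomain R] [CharZero R] {ι : Type*}
    (j T : ι → Matrix (Fin 2) (Fin 2) R) (hj : ∀ v, (j v).trace = 0) (hT : ∀ v, (T v).trace = 0)
    (hjT : ∀ v w, ⁅T v, j w⁆ = ⁅j v, T w⁆) {vE vF : ι} {a b : R} (ha : a ≠ 0) (hb : b ≠ 0)
    (hvE : j vE = a • sl2E R) (hvF : j vF = b • sl2F R) :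
    ∃ p q : R, q ≠ 0 ∧ ∀ v, q • T v = p • j v := by
  have lie_self (v : ι) : ⁅T v, j v⁆ = 0 := self_eq_neg.mp ((hjT v v).trans (lie_skew _ _).symm)
  have hE : ⁅T vE, sl2E R⁆ = 0 := by
    have h := lie_self vE
    rw [hvE, lie_smul, smul_eq_zero] at h
    exact h.resolve_left ha
  have hF : ⁅T vF, sl2F R⁆ = 0 := by
    have h := lie_self vF
    rw [hvF, lie_smul, smul_eq_zero] at h
    exact h.resolve_left hb
  set α := T vE 0 1
  set β := T vF 1 0
  have hα : T vE = α • sl2E R := eq_smul_sl2E_of_lie_sl2E_eq_zero (hT vE) hE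
  have hβ : T vF = β • sl2F R := eq_smul_sl2F_of_lie_sl2F_eq_zero (hT vF) hF
  have hαβ : α * b = a * β := by
    have h := hjT vE vF
    rw [hα, hvF, hvE, hβ, smul_lie, lie_smul, smul_lie, lie_smul, lie_sl2E_sl2F, smul_smul,
      smul_smul] at h
    exact smul_sl2H_injective h
  refine ⟨α * b, a * b, mul_ne_zero ha hb, fun v => sub_eq_zero.mp ?_⟩
  apply eq_zero_of_lie_sl2E_eq_zero_of_lie_sl2F_eq_zero
  · simp [trace_sub, trace_smul, hT, hj]
  · have h := hjT v vE
    rw [hvE, hα, lie_smul, lie_smul] at h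
    rw [sub_lie, smul_lie, smul_lie, mul_comm a b, mul_comm α b, mul_smul, mul_smul, h, sub_self]
  · have h := hjT v vF
    rw [hvF, hβ, lie_smul, lie_smul] at h
    rw [hαβ, sub_lie, smul_lie, smul_lie, mul_smul, mul_smul, h, sub_self]

end Matrix

open Matrix

theorem sl2Poly.exists_ne_zero_smul_mem (S : Submodule ℂ sl2Poly)
    [FiniteDimensional ℂ (sl2Poly ⧸ S)] (B : sl2Poly) :
    ∃ a : Polynomial ℂ, a ≠ 0 ∧ ∃ x ∈ S, (x : Matrix (Fin 2) (Fin 2) (Polynomial ℂ)) = a • B := by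
  let f : Polynomial ℂ →ₗ[ℂ] sl2Poly :=
    { toFun a := ⟨a • (B : Matrix (Fin 2) (Fin 2) (Polynomial ℂ)), by
        show trace _ = 0
        rw [trace_smul, B.2, smul_zero]⟩
      map_add' a b := Subtype.ext (add_smul a b _)
      map_smul' c a := Subtype.ext (smul_assoc c a _) }
  obtain ⟨a, ha, hS⟩ := f.exists_ne_zero_map_mem_of_not_finite Polynomial.not_finite S
  exact ⟨a, ha, f a, hS, rfl⟩

/-- Let `L ⊆ sl₂(ℂ[λ])` be a Lie subalgebra of finite codimension, `H ⊆ L` a Lie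
subalgebra of finite codimension in `L`, and `h : H → L` a ℂ-linear map intertwining the
adjoint action.  Then there are polynomials `p, q ∈ ℂ[λ]`, `q ≠ 0`, and a Lie subalgebra
`H̃ ⊆ H` of finite codimension in `H` with `q·h(w) = p·w` for all `w ∈ H̃`. -/
theorem stmt_4
    (L : LieSubalgebra ℂ sl2Poly)
    (hL : FiniteDimensional ℂ (sl2Poly ⧸ L.toSubmodule))
    (H : LieSubalgebra ℂ L)
    (hH : FiniteDimensional ℂ (L ⧸ H.toSubmodule))
    (h : H →ₗ[ℂ] L)
    (hint : ∀ p₁ p₂ : H, h ⁅p₁, p₂⁆ = ⁅h p₁, (p₂ : L)⁆ ∧ h ⁅p₁, p₂⁆ = ⁅(p₁ : L), h p₂⁆) :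
    ∃ p q : Polynomial ℂ, q ≠ 0 ∧
      ∃ H' : LieSubalgebra ℂ H, FiniteDimensional ℂ (H ⧸ H'.toSubmodule) ∧
        ∀ w : H, w ∈ H' →
          q • (((h w : L) : sl2Poly) : Matrix (Fin 2) (Fin 2) (Polynomial ℂ))
            = p • (((w : L) : sl2Poly) : Matrix (Fin 2) (Fin 2) (Polynomial ℂ)) := by
  let j (v : H) : Matrix (Fin 2) (Fin 2) (Polynomial ℂ) := ((v : L) : sl2Poly)
  let T (v : H) : Matrix (Fin 2) (Fin 2) (Polynomial ℂ) := ((h v : L) : sl2Poly)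
  have hjT (v w : H) : ⁅T v, j w⁆ = ⁅j v, T w⁆ := by
    simpa only [LieSubalgebra.coe_bracket] using
      congrArg (fun x : L => ((x : sl2Poly) : Matrix (Fin 2) (Fin 2) (Polynomial ℂ)))
        ((hint v w).1.symm.trans (hint v w).2)
  have : FiniteDimensional ℂ (sl2Poly ⧸ LinearMap.range L.toSubmodule.subtype) := by
    rwa [Submodule.range_subtype]
  have hmultiple (B : sl2Poly) : ∃ a : Polynomial ℂ, a ≠ 0 ∧ ∃ v : H, j v = a • B := by
    obtain ⟨a, ha, _, ⟨y, hy, rfl⟩, hyB⟩ :=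
      sl2Poly.exists_ne_zero_smul_mem (H.toSubmodule.map L.toSubmodule.subtype) B
    exact ⟨a, ha, ⟨y, hy⟩, hyB⟩
  obtain ⟨a, ha, vE, hvE⟩ := hmultiple ⟨sl2E _, trace_sl2E _⟩
  obtain ⟨b, hb, vF, hvF⟩ := hmultiple ⟨sl2F _, trace_sl2F _⟩
  obtain ⟨p, q, hq, hpq⟩ := exists_smul_eq_smul_of_lie_eq_lie j T (fun v => (v : L).1.2)
    (fun v => (h v).1.2) hjT ha hb hvE hvF
  refine ⟨p, q, hq, ⊤, ?_, fun w _ => hpq w⟩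
  rw [LieSubalgebra.top_toSubmodule]
  infer_instance
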